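/- Let f: 2^U → ℝ≥0 be submodular with maximum singleton value M = max_x f({x}), let O ⊆ U, A ⊆ U, and suppose x_1, ..., x_r were added to A in order with thresholds τ^{(1)} ≥ τ^{(2)} ≥ ... ≥ τ^{(r)} > 0 satisfying: f(A_{j}) − f(A_{j−1}) ≥ τ^{(j)} for each j (where A_j = A_{j−1} + x_j, A_0 = ∅), and for ε ∈ (0,1) every o ∈ O \ A_r satisfies f(A_r + o) − f(A_r) < τ_min/(1−ε) for some τ_min > 0. If additionally |O| ≤ k and each o ∈ O \ A_{j−1} not in A_r satisfied f(A_{j−1} + o) − f(A_{j−1}) < τ^{(j)}/(1−ε) at the time of addition, then f(O ∪ A_r) − f(A_r) ≤ (f(A_r) − f(A_0))/(1−ε) + k·τ_min/(1−ε). -/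

import Mathlib

/-!
Every element `o` of `O` missing from the greedy solution has marginal gain on `A_r` bounded by
its gain at the time it was discarded (diminishing returns along the chain `A_j ⊆ A_r`), hence by
`τ⁽ʲ⁾/(1−ε)` with `j = φ(o)`, or by `τ_min/(1−ε)` if `φ(o) = ⊥`. Since `φ` is injective, summing
these bounds over `O \ A_r` costs at most `τ_min/(1−ε)` plus `∑ⱼ τ⁽ʲ⁾/(1−ε)`, and the latter
telescopes against the greedy gains to at most `(f(A_r) − f(A_0))/(1−ε)`.
-/

open Finset

section Submodular

variable {U : Type*} [DecidableEq U]

def IsSubmodular (f : Finset U → ℝ) : Prop :=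
  ∀ X Y : Finset U, f (X ∪ Y) + f (X ∩ Y) ≤ f X + f Y

variable {f : Finset U → ℝ}

theorem IsSubmodular.marginal_le_of_subset (hf : IsSubmodular f) {S T : Finset U} {o : U}
    (hST : S ⊆ T) (hoT : o ∉ T) : f (insert o T) - f T ≤ f (insert o S) - f S := by
  have hunion : insert o S ∪ T = insert o T := by
    rw [insert_union, union_eq_right.mpr hST]
  have hinter : insert o S ∩ T = S := by
    rw [insert_inter_of_notMem hoT, inter_eq_left.mpr hST]
  have := hf (insert o S) T
  rw [hunion, hinter] at this
  linarith

theorem IsSubmodular.sub_le_sum_marginal (hf : IsSubmodular f) (S T : Finset U) :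
    f (S ∪ T) - f T ≤ ∑ o ∈ S \ T, (f (insert o T) - f T) := by
  induction S using Finset.induction_on with
  | empty => simp
  | @insert a S haS ih =>
    by_cases haT : a ∈ T
    · rwa [insert_union, insert_eq_of_mem (mem_union_right S haT), insert_sdiff_of_mem S haT]
    · have haST : a ∉ S ∪ T := by simp [haS, haT]
      rw [insert_union, insert_sdiff_of_notMem S haT,
        sum_insert fun h => haS (mem_sdiff.mp h).1]
      have := hf.marginal_le_of_subset subset_union_right haST
      linarith

end Submodular

theorem subset_of_forall_subset_succ {α : Type*} {A : ℕ → Finset α} {r : ℕ}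
    (hstep : ∀ j < r, A j ⊆ A (j + 1)) {j : ℕ} (hj : j ≤ r) : A j ⊆ A r :=
  Nat.decreasingInduction (motive := fun k _ => A k ⊆ A r)
    (fun k hk ih => (hstep k hk).trans ih) subset_rfl hj

theorem Fin.sum_univ_telescope {G : Type*} [AddCommGroup G] (g : ℕ → G) (r : ℕ) :
    ∑ j : Fin r, (g (j + 1) - g j) = g r - g 0 := by
  rw [Fin.sum_univ_eq_sum_range (fun i => g (i + 1) - g i), sum_range_sub]

theorem stmt_17_general {U : Type*} [DecidableEq U]
    (f : Finset U → ℝ)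
    (hsub : ∀ X Y : Finset U, f (X ∪ Y) + f (X ∩ Y) ≤ f X + f Y)
    (ε : ℝ) (hε1 : ε < 1)
    (k : ℕ) (hk : 0 < k) (τmin : ℝ) (hτmin : 0 < τmin)
    (r : ℕ) (x : Fin r → U) (A : ℕ → Finset U)
    (hAsucc : ∀ j : Fin r, A ((j : ℕ) + 1) = insert (x j) (A (j : ℕ)))
    (τ : Fin r → ℝ) (hτpos : ∀ j, 0 < τ j)
    (hτgain : ∀ j : Fin r, τ j ≤ f (A ((j : ℕ) + 1)) - f (A (j : ℕ)))
    (O : Finset U)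
    (φ : U → Option (Fin r))
    (hφinj : Set.InjOn φ ↑(O \ A r))
    (hφsome : ∀ o ∈ O \ A r, ∀ j : Fin r, φ o = some j →
      f (insert o (A (j : ℕ))) - f (A (j : ℕ)) < τ j / (1 - ε))
    (hφnone : ∀ o ∈ O \ A r, φ o = none →
      f (insert o (A r)) - f (A r) < τmin / (1 - ε)) :
    f (O ∪ A r) - f (A r) ≤ (f (A r) - f (A 0)) / (1 - ε) + (k : ℝ) * τmin / (1 - ε) := by
  have h1ε : 0 < 1 - ε := by linarith
  have hchain : ∀ j : Fin r, A j ⊆ A r := fun j =>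
    subset_of_forall_subset_succ (fun i hi => by rw [hAsucc ⟨i, hi⟩]; exact subset_insert _ _)
      j.isLt.le
  set bound : Option (Fin r) → ℝ := fun s => s.elim τmin τ / (1 - ε)
  have hmarg : ∀ o ∈ O \ A r, f (insert o (A r)) - f (A r) ≤ bound (φ o) := by
    intro o ho
    cases hφo : φ o with
    | none => exact (hφnone o ho hφo).le
    | some j =>
      exact ((IsSubmodular.marginal_le_of_subset hsub (hchain j) (mem_sdiff.mp ho).2).trans
        (hφsome o ho j hφo).le)
  have hbound : ∀ s, 0 ≤ bound s := by
    rintro (_ | j)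
    · exact (div_pos hτmin h1ε).le
    · exact (div_pos (hτpos j) h1ε).le
  have hτsum : ∑ j, τ j ≤ f (A r) - f (A 0) :=
    (sum_le_sum fun j _ => hτgain j).trans_eq (Fin.sum_univ_telescope (fun i => f (A i)) r)
  have hk1 : τmin ≤ k * τmin := le_mul_of_one_le_left hτmin.le (by exact_mod_cast hk)
  calc f (O ∪ A r) - f (A r)
      ≤ ∑ o ∈ O \ A r, (f (insert o (A r)) - f (A r)) := IsSubmodular.sub_le_sum_marginal hsub _ _
    _ ≤ ∑ o ∈ O \ A r, bound (φ o) := sum_le_sum hmarg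
    _ = ∑ s ∈ (O \ A r).image φ, bound s := (sum_image hφinj).symm
    _ ≤ ∑ s, bound s := sum_le_univ_sum_of_nonneg hbound
    _ = (τmin + ∑ j, τ j) / (1 - ε) := by simp [bound, Fintype.sum_option, add_div, sum_div]
    _ ≤ (f (A r) - f (A 0)) / (1 - ε) + k * τmin / (1 - ε) := by
      rw [add_comm, add_div]; gcongr

/-- Threshold-greedy bound: if the elements of `O` outside the greedy solution were
filtered at thresholds `τ⁽ʲ⁾/(1−ε)` (or below `τ_min/(1−ε)` at the end), then
`f(O ∪ A_r) − f(A_r) ≤ (f(A_r) − f(A_0))/(1−ε) + k·τ_min/(1−ε)`. -/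
theorem stmt_17 {U : Type*} [DecidableEq U] [Fintype U]
    (f : Finset U → ℝ)
    (hsub : ∀ X Y : Finset U, f (X ∪ Y) + f (X ∩ Y) ≤ f X + f Y)
    (hnn : ∀ S : Finset U, 0 ≤ f S)
    (ε : ℝ) (hε0 : 0 < ε) (hε1 : ε < 1)
    (k : ℕ) (hk : 0 < k) (τmin : ℝ) (hτmin : 0 < τmin)
    (r : ℕ) (x : Fin r → U) (A : ℕ → Finset U)
    (hA0 : A 0 = ∅)
    (hAsucc : ∀ j : Fin r, A ((j : ℕ) + 1) = insert (x j) (A (j : ℕ)))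
    (hxnew : ∀ j : Fin r, x j ∉ A (j : ℕ))
    (τ : Fin r → ℝ) (hτpos : ∀ j, 0 < τ j)
    (hτmono : ∀ j₁ j₂ : Fin r, j₁ ≤ j₂ → τ j₂ ≤ τ j₁)
    (hτgain : ∀ j : Fin r, τ j ≤ f (A ((j : ℕ) + 1)) - f (A (j : ℕ)))
    (O : Finset U) (hO : O.card ≤ k)
    (φ : U → Option (Fin r))
    (hφinj : Set.InjOn φ ↑(O \ A r))
    (hφsome : ∀ o ∈ O \ A r, ∀ j : Fin r, φ o = some j →
      f (insert o (A (j : ℕ))) - f (A (j : ℕ)) < τ j / (1 - ε))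
    (hφnone : ∀ o ∈ O \ A r, φ o = none →
      f (insert o (A r)) - f (A r) < τmin / (1 - ε)) :
    f (O ∪ A r) - f (A r) ≤ (f (A r) - f (A 0)) / (1 - ε) + (k : ℝ) * τmin / (1 - ε) :=
  stmt_17_general f hsub ε hε1 k hk τmin hτmin r x A hAsucc τ hτpos hτgain O φ hφinj hφsome hφnone
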